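/- Let G be a finite simple graph and v a vertex of G. Then d_c(G − v) = d_c(G) − 1 if and only if v ∈ ker(G). -/

import Mathlib

/-!
Write `d` for the difference in `G` and `N` for the neighbourhood. Since `X \ N X` is independent
with `d (X \ N X) ≥ d X`, the critical independent sets are the independent sets with
`d = d_c(G)`, so `v ∈ ker G` iff every maximiser `X` of `d` contains `v`, and then in fact
`v ∈ X \ N X`. In `G - v` a set `T ∌ v` has difference `d T + [v ∈ N T]`. A maximiser avoiding
`v` therefore keeps its difference in `G - v`. Conversely, let `v ∈ ker G`; a set `T ∌ v` can only
reach `d_c(G)` in `G - v` if `d T = d_c(G) - 1` and `v ∈ N T`. For a maximiser `K`,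
supermodularity `d (T ∪ K) + d (T ∩ K) ≥ d T + d K` then forces `T ∩ K` or `T ∪ K` to be a
maximiser, which is impossible: the first misses `v` and the second has `v` in its neighbourhood.
-/

open Finset

namespace CritGraph

variable {V : Type*} [Fintype V] [DecidableEq V]

/-- The neighborhood of a set of vertices `X`:
all vertices having at least one neighbor in `X`. -/
def nbhd (G : SimpleGraph V) [DecidableRel G.Adj] (X : Finset V) : Finset V :=
  univ.filter fun v => ∃ x ∈ X, G.Adj v x

/-- The difference `d(X) = |X| - |N(X)|` of a set of vertices `X`. -/
def diff (G : SimpleGraph V) [DecidableRel G.Adj] (X : Finset V) : ℤ :=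
  (X.card : ℤ) - ((nbhd G X).card : ℤ)

/-- A set of vertices is independent if no two of its vertices are adjacent. -/
def IsIndep (G : SimpleGraph V) (S : Finset V) : Prop :=
  ∀ u ∈ S, ∀ v ∈ S, ¬ G.Adj u v

instance (G : SimpleGraph V) [DecidableRel G.Adj] : DecidablePred (IsIndep G) := fun S =>
  inferInstanceAs (Decidable (∀ u ∈ S, ∀ v ∈ S, ¬ G.Adj u v))

/-- The critical difference `d_c(G) = max {d(X) : X ⊆ V}`. -/
def dC (G : SimpleGraph V) [DecidableRel G.Adj] : ℤ :=
  (univ : Finset V).powerset.sup' (Finset.powerset_nonempty _) (diff G)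

/-- The critical independence difference `id_c(G) = max {d(I) : I independent}`. -/
def idC (G : SimpleGraph V) [DecidableRel G.Adj] : ℤ :=
  ((univ : Finset V).powerset.filter (IsIndep G)).sup'
    ⟨∅, by simp [IsIndep]⟩ (diff G)

/-- `A` is a critical independent set: `A` is independent and
`d(A) = max {d(I) : I independent}`. -/
def IsCritIndep (G : SimpleGraph V) [DecidableRel G.Adj] (A : Finset V) : Prop :=
  IsIndep G A ∧ ∀ I : Finset V, IsIndep G I → diff G I ≤ diff G A

instance (G : SimpleGraph V) [DecidableRel G.Adj] : DecidablePred (IsCritIndep G) := fun A =>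
  inferInstanceAs (Decidable (IsIndep G A ∧ ∀ I : Finset V, IsIndep G I → diff G I ≤ diff G A))

/-- `ker(G)`: the intersection of all critical independent sets of `G`. -/
def kerG (G : SimpleGraph V) [DecidableRel G.Adj] : Finset V :=
  univ.filter fun v => ∀ A : Finset V, IsCritIndep G A → v ∈ A

/-- `G - v`: the induced subgraph of `G` on `V \ {v}`. -/
def deleteVert (G : SimpleGraph V) (v : V) : SimpleGraph {u : V // u ≠ v} :=
  G.comap Subtype.val

instance (G : SimpleGraph V) (v : V) [DecidableRel G.Adj] :
    DecidableRel (deleteVert G v).Adj := fun a b =>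
  inferInstanceAs (Decidable (G.Adj a.val b.val))

/-- `S` is an inclusion-minimal independent set with positive difference. -/
def MinPosIndep (G : SimpleGraph V) [DecidableRel G.Adj] (S : Finset V) : Prop :=
  IsIndep G S ∧ 0 < diff G S ∧ ∀ S' ⊂ S, ¬ (IsIndep G S' ∧ 0 < diff G S')

/-- `S` is a maximum independent set. -/
def IsMaxIndep (G : SimpleGraph V) (S : Finset V) : Prop :=
  IsIndep G S ∧ ∀ I : Finset V, IsIndep G I → I.card ≤ S.card

instance (G : SimpleGraph V) [DecidableRel G.Adj] : DecidablePred (IsMaxIndep G) := fun S =>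
  inferInstanceAs (Decidable (IsIndep G S ∧ ∀ I : Finset V, IsIndep G I → I.card ≤ S.card))

/-- `core(G)`: the intersection of all maximum independent sets of `G`. -/
def coreG (G : SimpleGraph V) [DecidableRel G.Adj] : Finset V :=
  univ.filter fun v => ∀ A : Finset V, IsMaxIndep G A → v ∈ A


section Difference

variable (G : SimpleGraph V) [DecidableRel G.Adj]

section

omit [DecidableEq V]

lemma mem_nbhd {X : Finset V} {u : V} : u ∈ nbhd G X ↔ ∃ x ∈ X, G.Adj u x := by
  simp [nbhd]

lemma nbhd_mono {X Y : Finset V} (h : X ⊆ Y) : nbhd G X ⊆ nbhd G Y := fun _ hu =>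
  let ⟨x, hx, hadj⟩ := (mem_nbhd G).1 hu
  (mem_nbhd G).2 ⟨x, h hx, hadj⟩

lemma diff_le_dC (X : Finset V) : diff G X ≤ dC G :=
  le_sup' _ (mem_powerset.2 (subset_univ X))

lemma exists_diff_eq_dC : ∃ X : Finset V, diff G X = dC G :=
  let ⟨X, _, hX⟩ := exists_mem_eq_sup' (powerset_nonempty (univ : Finset V)) (diff G)
  ⟨X, hX.symm⟩

end

lemma nbhd_union (X Y : Finset V) : nbhd G (X ∪ Y) = nbhd G X ∪ nbhd G Y := by
  ext u
  simp only [mem_nbhd, mem_union, or_and_right, exists_or]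

lemma diff_sub_one_le_diff_erase (X : Finset V) (v : V) : diff G X - 1 ≤ diff G (X.erase v) := by
  have hcard := pred_card_le_card_erase (s := X) (a := v)
  have hnbhd := card_le_card (nbhd_mono G (erase_subset v X))
  unfold diff
  omega

lemma diff_supermodular (X Y : Finset V) :
    diff G X + diff G Y ≤ diff G (X ∪ Y) + diff G (X ∩ Y) := by
  have hsets := card_union_add_card_inter X Y
  have hnbhds := card_union_add_card_inter (nbhd G X) (nbhd G Y)
  have hinter : nbhd G (X ∩ Y) ⊆ nbhd G X ∩ nbhd G Y :=
    subset_inter (nbhd_mono G inter_subset_left) (nbhd_mono G inter_subset_right)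
  have hinter_card := card_le_card hinter
  unfold diff
  rw [nbhd_union]
  omega

lemma isIndep_sdiff_nbhd (X : Finset V) : IsIndep G (X \ nbhd G X) := fun _ hu w hw hadj =>
  (mem_sdiff.1 hu).2 ((mem_nbhd G).2 ⟨w, (mem_sdiff.1 hw).1, hadj⟩)

lemma diff_le_diff_sdiff_nbhd (X : Finset V) : diff G X ≤ diff G (X \ nbhd G X) := by
  set A := X \ nbhd G X
  set B := X ∩ nbhd G X
  have hsplit : #A + #B = #X := card_sdiff_add_card_inter X (nbhd G X)
  have hdisj : Disjoint (nbhd G A) B := by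
    refine disjoint_left.2 fun b hb hbB => ?_
    obtain ⟨a, haA, hadj⟩ := (mem_nbhd G).1 hb
    exact (mem_sdiff.1 haA).2 ((mem_nbhd G).2 ⟨b, (mem_inter.1 hbB).1, hadj.symm⟩)
  have hsub : nbhd G A ∪ B ⊆ nbhd G X :=
    union_subset (nbhd_mono G sdiff_subset) inter_subset_right
  have hcard := card_le_card hsub
  rw [card_union_of_disjoint hdisj] at hcard
  unfold diff
  omega

lemma diff_sdiff_nbhd_eq_dC {X : Finset V} (hX : diff G X = dC G) :
    diff G (X \ nbhd G X) = dC G :=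
  le_antisymm (diff_le_dC G _) (hX ▸ diff_le_diff_sdiff_nbhd G X)

lemma isCritIndep_iff {A : Finset V} : IsCritIndep G A ↔ IsIndep G A ∧ diff G A = dC G := by
  obtain ⟨X, hX⟩ := exists_diff_eq_dC G
  refine ⟨fun hA => ⟨hA.1, le_antisymm (diff_le_dC G A) ?_⟩,
    fun hA => ⟨hA.1, fun I _ => hA.2 ▸ diff_le_dC G I⟩⟩
  rw [← diff_sdiff_nbhd_eq_dC G hX]
  exact hA.2 _ (isIndep_sdiff_nbhd G X)

lemma mem_kerG_iff {v : V} : v ∈ kerG G ↔ ∀ X : Finset V, diff G X = dC G → v ∈ X := by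
  simp only [kerG, mem_filter, mem_univ, true_and, isCritIndep_iff]
  exact ⟨fun h X hX =>
    (mem_sdiff.1 <| h _ ⟨isIndep_sdiff_nbhd G X, diff_sdiff_nbhd_eq_dC G hX⟩).1,
    fun h A hA => h A hA.2⟩

lemma notMem_nbhd_of_mem_kerG {v : V} (hv : v ∈ kerG G) {X : Finset V}
    (hX : diff G X = dC G) : v ∉ nbhd G X :=
  (mem_sdiff.1 ((mem_kerG_iff G).1 hv _ (diff_sdiff_nbhd_eq_dC G hX))).2

lemma diff_lt_dC_of_mem_kerG {v : V} (hv : v ∈ kerG G) {X : Finset V} (hvX : v ∉ X) :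
    diff G X < dC G :=
  (diff_le_dC G X).lt_of_ne fun hX => hvX ((mem_kerG_iff G).1 hv X hX)

lemma diff_add_one_lt_dC_of_mem_kerG {v : V} (hv : v ∈ kerG G) {X : Finset V} (hvX : v ∉ X)
    (hvN : v ∈ nbhd G X) : diff G X + 1 < dC G := by
  by_contra! hX
  obtain ⟨K, hK⟩ := exists_diff_eq_dC G
  have hsum := diff_supermodular G X K
  have hunion := diff_le_dC G (X ∪ K)
  have hinter : diff G (X ∩ K) < dC G :=
    diff_lt_dC_of_mem_kerG G hv fun h => hvX (mem_inter.1 h).1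
  have hvNunion : v ∈ nbhd G (X ∪ K) := nbhd_mono G subset_union_left hvN
  exact notMem_nbhd_of_mem_kerG G hv (by omega) hvNunion

end Difference

section DeleteVertex

variable (G : SimpleGraph V) [DecidableRel G.Adj] (v : V)

local notation "ι" => Function.Embedding.subtype fun u : V => u ≠ v

lemma nbhd_deleteVert_map (S : Finset {u : V // u ≠ v}) :
    (nbhd (deleteVert G v) S).map ι = (nbhd G (S.map ι)).erase v := by
  ext u
  simp only [mem_map, mem_erase, mem_nbhd, Function.Embedding.coe_subtype]
  constructor
  · rintro ⟨w, ⟨x, hx, hadj⟩, rfl⟩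
    exact ⟨w.2, x, ⟨x, hx, rfl⟩, hadj⟩
  · rintro ⟨hne, _, ⟨x, hx, rfl⟩, hadj⟩
    exact ⟨⟨u, hne⟩, ⟨x, hx, hadj⟩, rfl⟩

lemma diff_deleteVert (S : Finset {u : V // u ≠ v}) :
    diff (deleteVert G v) S = diff G (S.map ι) + if v ∈ nbhd G (S.map ι) then 1 else 0 := by
  have hcard := congrArg card (nbhd_deleteVert_map G v S)
  rw [card_map] at hcard
  unfold diff
  rw [card_map]
  split_ifs with hvN
  · rw [card_erase_of_mem hvN] at hcard
    have hpos := card_pos.2 ⟨v, hvN⟩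
    omega
  · rw [erase_eq_of_notMem hvN] at hcard
    omega

lemma diff_le_diff_deleteVert {X : Finset V} (hvX : v ∉ X) :
    diff G X ≤ diff (deleteVert G v) (X.subtype (· ≠ v)) := by
  have hX : (X.subtype (· ≠ v)).map ι = X := subtype_map_of_mem fun u hu h => hvX (h ▸ hu)
  rw [diff_deleteVert, hX]
  split_ifs <;> omega

lemma dC_sub_one_le_dC_deleteVert : dC G - 1 ≤ dC (deleteVert G v) := by
  obtain ⟨X, hX⟩ := exists_diff_eq_dC G
  calc dC G - 1 = diff G X - 1 := by rw [hX]
    _ ≤ diff G (X.erase v) := diff_sub_one_le_diff_erase G X v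
    _ ≤ diff (deleteVert G v) _ := diff_le_diff_deleteVert G v (notMem_erase v X)
    _ ≤ dC (deleteVert G v) := diff_le_dC _ _

lemma diff_deleteVert_lt_dC_of_mem_kerG (hv : v ∈ kerG G) (S : Finset {u : V // u ≠ v}) :
    diff (deleteVert G v) S < dC G := by
  have hvS : v ∉ S.map ι := fun h =>
    let ⟨w, _, hw⟩ := mem_map.1 h
    w.2 hw
  rw [diff_deleteVert]
  split_ifs with hvN
  · exact diff_add_one_lt_dC_of_mem_kerG G hv hvS hvN
  · simpa using diff_lt_dC_of_mem_kerG G hv hvS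

end DeleteVertex

/-- `d_c(G - v) = d_c(G) - 1` if and only if `v ∈ ker(G)`. -/
theorem dC_deleteVert_eq_sub_one_iff_mem_kerG (G : SimpleGraph V) [DecidableRel G.Adj]
    (v : V) : dC (deleteVert G v) = dC G - 1 ↔ v ∈ kerG G := by
  refine ⟨fun h => (mem_kerG_iff G).2 fun X hX => ?_, fun hv => ?_⟩
  · by_contra hvX
    have hle := (diff_le_diff_deleteVert G v hvX).trans (diff_le_dC _ _)
    omega
  · refine le_antisymm ?_ (dC_sub_one_le_dC_deleteVert G v)
    exact sup'_le _ _ fun S _ => Int.le_sub_one_of_lt (diff_deleteVert_lt_dC_of_mem_kerG G v hv S)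

end CritGraph
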